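/- arXiv:2402.14286 — 7 statements merged into one kernel-verified Lean document; each statement's English description precedes it below -/
import Mathlib

section
/- If (x₁,…,xₙ) and (y₁,…,yₘ) are snakes, then the sequence (2, x₁+1, x₂+1, …, xₙ+1, y₁, y₂, …, yₘ) is a snake. -/
/-- A finite sequence of naturals is a snake. -/
def Snake (x : List ℕ) : Prop :=
  x = [0] ∨
    (x ≠ [] ∧ x.head? = some 2 ∧ x.getLast? = some 0 ∧
      (∀ i, i + 1 < x.length → 0 < x[i]!) ∧
      (∀ i, i + 1 < x.length → x[i + 1]! = x[i]! + 1 ∨ x[i]! = x[i + 1]! + 1))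

def oplus (x y : List ℕ) : List ℕ := 2 :: (x.map (· + 1) ++ y)

/-! Unfolded into list language, a snake other than `[0]` starts at `2`, ends at `0`, is positive
off its last entry, and is a chain of unit steps. Shifting `x` up by one keeps its steps, and
the two seams of `oplus x y` are unit steps as well: `2` is followed by `x₁ + 1 ∈ {1, 3}`, and
`xₙ + 1 = 1` is followed by `y₁ ∈ {0, 2}`. -/

theorem List.isChain_iff_getElem! {α : Type*} [Inhabited α] {R : α → α → Prop} {l : List α} :
    l.IsChain R ↔ ∀ i, i + 1 < l.length → R l[i]! l[i + 1]! := by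
  rw [List.isChain_iff_getElem]
  refine forall_congr' fun i => ⟨fun h hi => ?_, fun h hi => ?_⟩ <;>
    simpa [getElem!_pos l i (by omega), getElem!_pos l (i + 1) hi] using h hi

theorem List.forall_mem_dropLast_iff_getElem! {α : Type*} [Inhabited α] {p : α → Prop}
    {l : List α} : (∀ a ∈ l.dropLast, p a) ↔ ∀ i, i + 1 < l.length → p l[i]! := by
  rw [List.forall_mem_iff_getElem]
  refine forall_congr' fun i => ⟨fun h hi => ?_, fun h hi => ?_⟩
  · have := h (by simp; omega)
    rwa [List.getElem_dropLast, ← getElem!_pos] at this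
  · rw [List.length_dropLast] at hi
    rw [List.getElem_dropLast, ← getElem!_pos]
    exact h (by omega)

def DiffByOne (a b : ℕ) : Prop := b = a + 1 ∨ a = b + 1

theorem snake_iff {x : List ℕ} : Snake x ↔ x = [0] ∨
    (x.head? = some 2 ∧ x.getLast? = some 0 ∧ (∀ a ∈ x.dropLast, 0 < a) ∧
      x.IsChain DiffByOne) := by
  rw [Snake, List.isChain_iff_getElem!, List.forall_mem_dropLast_iff_getElem!]
  refine or_congr_right ⟨fun h => h.2, fun h => ⟨?_, h⟩⟩
  rintro rfl
  simp at h

namespace Snake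

variable {x : List ℕ}

theorem ne_nil (hx : Snake x) : x ≠ [] := by
  rcases snake_iff.1 hx with rfl | ⟨h, -⟩
  · simp
  · rintro rfl; simp at h

theorem head?_eq (hx : Snake x) : x.head? = some 0 ∨ x.head? = some 2 := by
  rcases snake_iff.1 hx with rfl | ⟨h, -⟩
  · simp
  · exact Or.inr h

theorem getLast?_eq (hx : Snake x) : x.getLast? = some 0 := by
  rcases snake_iff.1 hx with rfl | ⟨-, h, -⟩
  · simp
  · exact h

theorem pos_of_mem_dropLast (hx : Snake x) {a : ℕ} (ha : a ∈ x.dropLast) : 0 < a := by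
  rcases snake_iff.1 hx with rfl | ⟨-, -, h, -⟩
  · simp at ha
  · exact h a ha

theorem isChain (hx : Snake x) : x.IsChain DiffByOne := by
  rcases snake_iff.1 hx with rfl | ⟨-, -, -, h⟩
  · simp
  · exact h

end Snake

theorem oplus_snake (x y : List ℕ) (hx : Snake x) (hy : Snake y) :
    Snake (oplus x y) := by
  refine snake_iff.2 (Or.inr ⟨rfl, ?_, ?_, ?_⟩) <;> rw [oplus, ← List.cons_append]
  · rw [List.getLast?_append, hy.getLast?_eq]
    rfl
  · rw [List.dropLast_append_of_ne_nil hy.ne_nil]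
    intro a ha
    simp only [List.mem_append, List.mem_cons, List.mem_map] at ha
    rcases ha with (rfl | ⟨b, -, rfl⟩) | ha
    · decide
    · exact b.succ_pos
    · exact hy.pos_of_mem_dropLast ha
  · refine List.isChain_append.2 ⟨?_, hy.isChain, ?_⟩
    · refine List.isChain_cons.2 ⟨?_, List.isChain_map _ |>.2 (hx.isChain.imp fun _ _ => ?_)⟩
      · rw [List.head?_map]
        rcases hx.head?_eq with h | h <;> simp [h, DiffByOne]
      · unfold DiffByOne; omega
    · rw [List.getLast?_cons, List.getLast?_map, hx.getLast?_eq]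
      rcases hy.head?_eq with h | h <;> simp [h, DiffByOne]
end

section
/- The map t ↦ t̃ sending each finite binary tree to its associated snake is injective. -/
inductive BTree | bot | node (l r : BTree)

def tilde : BTree → List ℕ
  | .bot => [0]
  | .node l r => oplus (tilde l) (tilde r)

/-!
Every snake `tilde t` contains `0`, and only as its last entry. Hence no snake is a proper prefix
of another, so in `oplus (tilde l) (tilde r) = 2 :: ((tilde l).map (· + 1) ++ tilde r)` the
shifted left part can be split off uniquely, and injectivity follows by induction on trees.
-/

theorem List.eq_of_prefix_of_mem_of_notMem_dropLast {α : Type*} {a b : List α} {k : α}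
    (hab : a <+: b) (ha : k ∈ a) (hb : k ∉ b.dropLast) : a = b := by
  obtain ⟨s, rfl⟩ := hab
  rcases eq_or_ne s [] with rfl | hs
  · exact (List.append_nil a).symm
  · rw [List.dropLast_append_of_ne_nil hs] at hb
    exact absurd (List.mem_append_left _ ha) hb

lemma tilde_ne_nil (t : BTree) : tilde t ≠ [] := by
  cases t <;> simp [tilde, oplus]

lemma zero_mem_tilde (t : BTree) : 0 ∈ tilde t := by
  induction t with
  | bot => simp [tilde]
  | node l r _ ihr => simp [tilde, oplus, ihr]

lemma zero_notMem_dropLast_tilde (t : BTree) : 0 ∉ (tilde t).dropLast := by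
  induction t with
  | bot => simp [tilde]
  | node l r _ ihr =>
    rw [tilde, oplus, List.dropLast_cons_of_ne_nil (by simp [tilde_ne_nil r]),
      List.dropLast_append_of_ne_nil (tilde_ne_nil r)]
    simpa using ihr

lemma eq_of_tilde_prefix {a b : BTree} (h : tilde a <+: tilde b) : tilde a = tilde b :=
  List.eq_of_prefix_of_mem_of_notMem_dropLast h (zero_mem_tilde a) (zero_notMem_dropLast_tilde b)

lemma tilde_eq_of_oplus_tilde_eq {l₁ r₁ l₂ r₂ : BTree}
    (h : oplus (tilde l₁) (tilde r₁) = oplus (tilde l₂) (tilde r₂)) :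
    tilde l₁ = tilde l₂ ∧ tilde r₁ = tilde r₂ := by
  simp only [oplus, List.cons.injEq, true_and] at h
  have hl : tilde l₁ = tilde l₂ := by
    have h₁ : (tilde l₁).map (· + 1) <+: (tilde l₂).map (· + 1) ++ tilde r₂ :=
      h ▸ List.prefix_append _ _
    rcases List.prefix_or_prefix_of_prefix h₁ (List.prefix_append _ _) with h₁₂ | h₂₁
    · exact eq_of_tilde_prefix ((List.prefix_map_iff_of_injective (add_left_injective 1)).1 h₁₂)
    · exact (eq_of_tilde_prefix
        ((List.prefix_map_iff_of_injective (add_left_injective 1)).1 h₂₁)).symm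
  exact ⟨hl, List.append_cancel_left (hl ▸ h)⟩

theorem tilde_injective : Function.Injective tilde := by
  intro t₁ t₂ h
  induction t₁ generalizing t₂ with
  | bot => cases t₂ <;> simp_all [tilde, oplus]
  | node l₁ r₁ ihl ihr =>
    cases t₂ with
    | bot => simp [tilde, oplus] at h
    | node l₂ r₂ =>
      obtain ⟨hl, hr⟩ := tilde_eq_of_oplus_tilde_eq h
      rw [ihl hl, ihr hr]
end

section
/- The map t ↦ t̃ sending finite binary trees to snakes is surjective onto the set of snakes: every snake is of the form t̃ for some finite binary tree t. -/
/-!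
Call a `±1`-walk in `ℕ` that stays positive until it reaches `0` at its last entry a path to
zero; the snakes are exactly the paths to zero starting at `0` or `2`. A snake `2 :: t` other than
`[0]` is cut just after the first `1` of `t`: this writes `t` as `u.map (· + 1) ++ y`, where `u` and
`y` are again paths to zero, and they start at `0` or `2` because `u.map (· + 1)` starts at a
neighbour of `2` and `y` at a neighbour of `1`. So by induction on length the snake is `ũ ⊕ ỹ`.
-/

inductive PathToZero : List ℕ → Prop
  | zero : PathToZero [0]
  | cons {a b : ℕ} {l : List ℕ} : 0 < a → (b = a + 1 ∨ a = b + 1) → PathToZero (b :: l) →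
      PathToZero (a :: b :: l)

namespace PathToZero

theorem ne_nil {x : List ℕ} (hx : PathToZero x) : x ≠ [] := by
  cases hx <;> simp

theorem of_forall_getElem! {x : List ℕ} (hlast : x.getLast? = some 0)
    (hpos : ∀ i, i + 1 < x.length → 0 < x[i]!)
    (hadj : ∀ i, i + 1 < x.length → x[i + 1]! = x[i]! + 1 ∨ x[i]! = x[i + 1]! + 1) :
    PathToZero x := by
  induction x with
  | nil => simp at hlast
  | cons a l ih =>
    match l, hlast with
    | [], hlast =>
      simp only [List.getLast?_singleton, Option.some.injEq] at hlast
      exact hlast ▸ zero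
    | b :: l, hlast =>
      refine cons (by simpa using hpos 0 (by simp)) (by simpa using hadj 0 (by simp)) (ih ?_ ?_ ?_)
      · simpa [List.getLast?_cons_cons] using hlast
      · intro i hi; simpa using hpos (i + 1) (by simp only [List.length_cons] at hi ⊢; omega)
      · intro i hi; simpa using hadj (i + 1) (by simp only [List.length_cons] at hi ⊢; omega)

theorem exists_eq_map_succ_append {x : List ℕ} (hx : PathToZero x) (hx0 : x ≠ [0]) :
    ∃ u y, x = u.map (· + 1) ++ y ∧ PathToZero u ∧ PathToZero y ∧
      (y.head? = some 0 ∨ y.head? = some 2) := by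
  induction hx with
  | zero => exact absurd rfl hx0
  | @cons a b l ha hab hbl ih =>
    by_cases ha1 : a = 1
    · subst ha1
      exact ⟨[0], b :: l, rfl, zero, hbl, by simp only [List.head?_cons, Option.some.injEq]; omega⟩
    · obtain ⟨u, y, hbly, hu, hy, hyhead⟩ := ih (by rintro ⟨⟩; omega)
      obtain ⟨c, u, rfl⟩ := List.exists_cons_of_ne_nil hu.ne_nil
      simp only [List.map_cons, List.cons_append, List.cons.injEq] at hbly
      obtain ⟨rfl, rfl⟩ := hbly
      refine ⟨(a - 1) :: c :: u, y, ?_, cons (by omega) (by omega) hu, hy, hyhead⟩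
      simp only [List.map_cons, List.cons_append, Nat.sub_add_cancel (by omega : 1 ≤ a)]

theorem exists_tilde_eq {x : List ℕ} (hx : PathToZero x)
    (hhead : x.head? = some 0 ∨ x.head? = some 2) : ∃ t, tilde t = x := by
  induction hlen : x.length using Nat.strong_induction_on generalizing x with
  | _ n ih =>
    cases hx with
    | zero => exact ⟨.bot, rfl⟩
    | @cons a b l ha hab hbl =>
      obtain rfl : a = 2 := by simp only [List.head?_cons, Option.some.injEq] at hhead; omega
      obtain ⟨u, y, hbly, hu, hy, hyhead⟩ := hbl.exists_eq_map_succ_append (by rintro ⟨⟩; omega)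
      obtain ⟨c, u, rfl⟩ := List.exists_cons_of_ne_nil hu.ne_nil
      simp only [List.map_cons, List.cons_append, List.cons.injEq] at hbly
      obtain ⟨rfl, rfl⟩ := hbly
      simp only [List.length_cons, List.length_append, List.length_map] at hlen
      obtain ⟨tu, htu⟩ := ih _ (by simp only [List.length_cons]; omega) hu
        (by simp only [List.head?_cons, Option.some.injEq]; omega) rfl
      obtain ⟨ty, hty⟩ := ih _ (by omega) hy hyhead rfl
      exact ⟨.node tu ty, by rw [tilde, htu, hty]; rfl⟩

end PathToZero

theorem tilde_surjective_onto_snakes (x : List ℕ) (hx : Snake x) :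
    ∃ t : BTree, tilde t = x := by
  rcases hx with rfl | ⟨-, hhead, hlast, hpos, hadj⟩
  · exact ⟨.bot, rfl⟩
  · exact (PathToZero.of_forall_getElem! hlast hpos hadj).exists_tilde_eq (.inr hhead)
end

section
/- For finite binary trees t₁, t₂ and their snake representations, t₁ is a subtree of t₂ if and only if t̃₁ R t̃₂, where R is the relation: s R u holds iff s = (0), or s = u, or s is isomorphic with a strict part of u. -/
/-- the subtree relation `s ⊑ t`. -/
def Subtree (s : BTree) : BTree → Prop
  | .bot => s = .bot
  | .node l r => s = .node l r ∨ Subtree s l ∨ Subtree s r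

/-- `x` is isomorphic with a strict part of `y` (indices here are 0-based;
`k` plays the role of the 1-based index `k` shifted by one). -/
def IsoStrictPart (x y : List ℕ) : Prop :=
  ∃ k ℓ : ℕ, k + x.length < y.length ∧
    y[k + 1]! = y[k]! + 1 ∧
    (∀ i, i < x.length → y[k + 1 + i]! = x[i]! + ℓ) ∧
    y[k + x.length]! + 2 = y[k + 1]!

def R (x y : List ℕ) : Prop := x = [0] ∨ x = y ∨ IsoStrictPart x y

/- ### auxiliary lemmas -/

lemma oplus_length (x y : List ℕ) : (oplus x y).length = x.length + y.length + 1 := by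
  simp [oplus]

lemma tilde_length_pos (t : BTree) : 0 < (tilde t).length := by
  cases t <;> simp [tilde, oplus]

lemma tilde_node_length (l r : BTree) :
    (tilde (.node l r)).length = (tilde l).length + (tilde r).length + 1 := by
  simp [tilde, oplus_length]

lemma tilde_get_zero_node (l r : BTree) : (tilde (.node l r))[0]! = 2 := by
  simp [tilde, oplus]

lemma tilde_get_left (l r : BTree) {i : ℕ} (h : i < (tilde l).length) :
    (tilde (.node l r))[i + 1]! = (tilde l)[i]! + 1 := by
  show (oplus (tilde l) (tilde r))[i + 1]! = _
  rw [getElem!_def, getElem!_def]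
  simp only [oplus]
  rw [List.getElem?_cons_succ, List.getElem?_append_left (by simpa using h),
    List.getElem?_map, List.getElem?_eq_getElem h]
  simp

lemma tilde_get_right (l r : BTree) {j : ℕ} (_h : j < (tilde r).length) :
    (tilde (.node l r))[(tilde l).length + 1 + j]! = (tilde r)[j]! := by
  show (oplus (tilde l) (tilde r))[(tilde l).length + 1 + j]! = _
  rw [getElem!_def, getElem!_def]
  simp only [oplus]
  rw [show (tilde l).length + 1 + j = ((tilde l).length + j) + 1 by omega,
    List.getElem?_cons_succ, List.getElem?_append_right (by simp),
    show (tilde l).length + j - ((tilde l).map (· + 1)).length = j by simp]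

lemma tilde_last (t : BTree) : (tilde t)[(tilde t).length - 1]! = 0 := by
  induction t with
  | bot => simp [tilde]
  | node l r ihl ihr =>
    have hb := tilde_length_pos r
    rw [tilde_node_length,
      show (tilde l).length + (tilde r).length + 1 - 1
        = (tilde l).length + 1 + ((tilde r).length - 1) by omega,
      tilde_get_right l r (by omega)]
    exact ihr

lemma tilde_pos (t : BTree) : ∀ {i : ℕ}, i < (tilde t).length - 1 → (tilde t)[i]! ≠ 0 := by
  induction t with
  | bot => intro i h; simp [tilde] at h
  | node l r ihl ihr =>
    intro i h
    rw [tilde_node_length] at h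
    rcases Nat.eq_zero_or_pos i with rfl | hi
    · rw [tilde_get_zero_node]; omega
    · by_cases hil : i ≤ (tilde l).length
      · rw [show i = (i - 1) + 1 by omega, tilde_get_left l r (by omega)]
        omega
      · rw [show i = (tilde l).length + 1 + (i - (tilde l).length - 1) by omega,
          tilde_get_right l r (by omega)]
        exact ihr (by omega)

lemma subtree_refl (t : BTree) : Subtree t t := by
  cases t with
  | bot => rfl
  | node l r => exact Or.inl rfl

lemma bot_subtree (t : BTree) : Subtree .bot t := by
  induction t with
  | bot => rfl
  | node l r ihl ihr => exact Or.inr (Or.inl ihl)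

lemma tilde_prefix : ∀ (l : BTree) (c : ℕ) (l' : BTree) (u u' : List ℕ),
    (tilde l).map (· + c) ++ u = (tilde l').map (· + c) ++ u' → l = l' ∧ u = u' := by
  intro l
  induction l with
  | bot =>
    intro c l' u u' h
    cases l' with
    | bot => simpa [tilde] using h
    | node a b => simp [tilde, oplus] at h
  | node a b iha ihb =>
    intro c l' u u' h
    cases l' with
    | bot => simp [tilde, oplus] at h
    | node a' b' =>
      simp only [tilde, oplus, List.map_cons, List.map_append, List.map_map,
        List.cons_append, List.append_assoc, List.cons.injEq] at h
      have hc : ((· + c) ∘ (· + 1) : ℕ → ℕ) = (· + (c + 1)) := by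
        funext x; simp; omega
      rw [hc] at h
      obtain ⟨ha, hu⟩ := iha (c + 1) a' _ _ h.2
      obtain ⟨hb, hu'⟩ := ihb c b' _ _ hu
      exact ⟨by rw [ha, hb], hu'⟩

lemma tilde_inj {s t : BTree} (h : tilde s = tilde t) : s = t := by
  have h' : (tilde s).map (· + 0) ++ [] = (tilde t).map (· + 0) ++ [] := by
    simp [h]
  exact (tilde_prefix s 0 t [] [] h').1

lemma eq_of_get! {x y : List ℕ} (hl : x.length = y.length)
    (h : ∀ i, i < x.length → x[i]! = y[i]!) : x = y := by
  apply List.ext_getElem hl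
  intro i h1 h2
  rw [← getElem!_pos x i h1, ← getElem!_pos y i h2]
  exact h i h1

/- ### forward embedding lemmas -/

lemma iso_oplus_left {x : List ℕ} (l r : BTree) (hn : 0 < x.length)
    (h : IsoStrictPart x (tilde l)) : IsoStrictPart x (tilde (.node l r)) := by
  obtain ⟨k, ℓ, h1, h2, h3, h4⟩ := h
  have hb := tilde_length_pos r
  refine ⟨k + 1, ℓ + 1, ?_, ?_, ?_, ?_⟩
  · rw [tilde_node_length]; omega
  · rw [show k + 1 + 1 = (k + 1) + 1 by omega, tilde_get_left l r (by omega),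
      tilde_get_left l r (by omega)]
    omega
  · intro i hi
    rw [show k + 1 + 1 + i = (k + 1 + i) + 1 by omega, tilde_get_left l r (by omega),
      h3 i hi]
    omega
  · rw [show k + 1 + x.length = (k + x.length) + 1 by omega,
      tilde_get_left l r (by omega),
      show k + 1 + 1 = (k + 1) + 1 by omega, tilde_get_left l r (by omega)]
    omega

lemma iso_oplus_right {x : List ℕ} (l r : BTree) (hn : 0 < x.length)
    (h : IsoStrictPart x (tilde r)) : IsoStrictPart x (tilde (.node l r)) := by
  obtain ⟨k, ℓ, h1, h2, h3, h4⟩ := h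
  refine ⟨(tilde l).length + 1 + k, ℓ, ?_, ?_, ?_, ?_⟩
  · rw [tilde_node_length]; omega
  · rw [show (tilde l).length + 1 + k + 1 = (tilde l).length + 1 + (k + 1) by omega,
      tilde_get_right l r (by omega), tilde_get_right l r (by omega)]
    exact h2
  · intro i hi
    rw [show (tilde l).length + 1 + k + 1 + i = (tilde l).length + 1 + (k + 1 + i) by omega,
      tilde_get_right l r (by omega)]
    exact h3 i hi
  · rw [show (tilde l).length + 1 + k + x.length
        = (tilde l).length + 1 + (k + x.length) by omega,
      tilde_get_right l r (by omega),
      show (tilde l).length + 1 + k + 1 = (tilde l).length + 1 + (k + 1) by omega,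
      tilde_get_right l r (by omega)]
    exact h4

lemma iso_left_whole (a b r : BTree) :
    IsoStrictPart (tilde (.node a b)) (tilde (.node (.node a b) r)) := by
  have hx1 := tilde_length_pos (BTree.node a b)
  have hr1 := tilde_length_pos r
  refine ⟨0, 1, ?_, ?_, ?_, ?_⟩
  · rw [tilde_node_length (BTree.node a b) r]; omega
  · have E1 : (tilde (BTree.node (BTree.node a b) r))[0 + 1]!
        = (tilde (BTree.node a b))[0]! + 1 := tilde_get_left _ r (by omega)
    have E0 := tilde_get_zero_node (BTree.node a b) r
    have E4 := tilde_get_zero_node a b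
    omega
  · intro i hi
    rw [show 0 + 1 + i = i + 1 by omega, tilde_get_left (BTree.node a b) r hi]
  · rw [show 0 + (tilde (BTree.node a b)).length
        = ((tilde (BTree.node a b)).length - 1) + 1 by omega,
      tilde_get_left (BTree.node a b) r (by omega)]
    have E1 : (tilde (BTree.node (BTree.node a b) r))[0 + 1]!
        = (tilde (BTree.node a b))[0]! + 1 := tilde_get_left _ r (by omega)
    have E4 := tilde_get_zero_node a b
    have E5 := tilde_last (BTree.node a b)
    omega

lemma iso_right_whole (l a b : BTree) :
    IsoStrictPart (tilde (.node a b)) (tilde (.node l (.node a b))) := by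
  have hx1 := tilde_length_pos (BTree.node a b)
  have hl1 := tilde_length_pos l
  refine ⟨(tilde l).length, 0, ?_, ?_, ?_, ?_⟩
  · rw [tilde_node_length l (BTree.node a b)]; omega
  · have E1 := tilde_get_right l (BTree.node a b)
      (show 0 < (tilde (BTree.node a b)).length by omega)
    rw [show (tilde l).length + 1 + 0 = (tilde l).length + 1 by omega] at E1
    have E2 := tilde_get_left l (BTree.node a b)
      (show (tilde l).length - 1 < (tilde l).length by omega)
    rw [show (tilde l).length - 1 + 1 = (tilde l).length by omega] at E2
    have E3 := tilde_last l
    have E4 := tilde_get_zero_node a b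
    omega
  · intro i hi
    rw [tilde_get_right l (BTree.node a b) hi]
    omega
  · rw [show (tilde l).length + (tilde (BTree.node a b)).length
        = (tilde l).length + 1 + ((tilde (BTree.node a b)).length - 1) by omega,
      tilde_get_right l (BTree.node a b) (by omega)]
    have E1 := tilde_get_right l (BTree.node a b)
      (show 0 < (tilde (BTree.node a b)).length by omega)
    rw [show (tilde l).length + 1 + 0 = (tilde l).length + 1 by omega] at E1
    have E4 := tilde_get_zero_node a b
    have E5 := tilde_last (BTree.node a b)
    omega

/- ### backward direction -/

lemma iso_subtree : ∀ (t s : BTree), IsoStrictPart (tilde s) (tilde t) → Subtree s t := by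
  intro t
  induction t with
  | bot =>
    intro s ⟨k, ℓ, h1, _⟩
    have := tilde_length_pos s
    simp only [tilde, List.length_singleton] at h1
    omega
  | node l r ihl ihr =>
    intro s ⟨k, ℓ, h1, h2, h3, h4⟩
    have hn1 : 0 < (tilde s).length := tilde_length_pos s
    have ha1 : 0 < (tilde l).length := tilde_length_pos l
    have hb1 : 0 < (tilde r).length := tilde_length_pos r
    rw [tilde_node_length] at h1
    have hxlast : (tilde s)[(tilde s).length - 1]! = 0 := tilde_last s
    by_cases hA : k + (tilde s).length ≤ (tilde l).length
    · -- segment entirely within the left part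
      rcases Nat.eq_zero_or_pos k with rfl | hkpos
      · -- k = 0 : x is all of tilde l
        have E1 : (tilde (BTree.node l r))[0 + 1]! = (tilde l)[0]! + 1 :=
          tilde_get_left l r (by omega)
        have E0 := tilde_get_zero_node l r
        have E2 : (tilde (BTree.node l r))[((tilde s).length - 1) + 1]!
            = (tilde l)[(tilde s).length - 1]! + 1 := tilde_get_left l r (by omega)
        rw [show 0 + (tilde s).length = ((tilde s).length - 1) + 1 by omega] at h4
        have hm := h3 ((tilde s).length - 1) (by omega)
        rw [show 0 + 1 + ((tilde s).length - 1) = ((tilde s).length - 1) + 1 by omega] at hm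
        have hln : (tilde l)[(tilde s).length - 1]! = 0 := by
          rw [E2, E1] at h4
          rw [E1, E0] at h2
          omega
        have hna : (tilde s).length = (tilde l).length := by
          by_contra hne
          exact tilde_pos l (by omega) hln
        have hl : ℓ = 1 := by rw [E2, hln, hxlast] at hm; omega
        subst hl
        have hxeq : tilde s = tilde l := by
          apply eq_of_get! hna
          intro i hi
          have h := h3 i hi
          rw [show 0 + 1 + i = i + 1 by omega, tilde_get_left l r (by omega)] at h
          omega
        rw [tilde_inj hxeq]
        exact Or.inr (Or.inl (subtree_refl l))
      · -- k >= 1 : occurrence inside tilde l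
        obtain ⟨j, rfl⟩ : ∃ j, k = j + 1 := ⟨k - 1, by omega⟩
        have Ek : (tilde (BTree.node l r))[j + 1]! = (tilde l)[j]! + 1 :=
          tilde_get_left l r (by omega)
        have Ek1 : (tilde (BTree.node l r))[j + 1 + 1]! = (tilde l)[j + 1]! + 1 :=
          tilde_get_left l r (by omega)
        have hm := h3 ((tilde s).length - 1) (by omega)
        rw [show j + 1 + 1 + ((tilde s).length - 1) = (j + (tilde s).length) + 1 by omega,
          tilde_get_left l r (by omega), hxlast] at hm
        rw [show j + 1 + (tilde s).length = (j + (tilde s).length) + 1 by omega,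
          tilde_get_left l r (by omega), Ek1] at h4
        rw [Ek1, Ek] at h2
        refine Or.inr (Or.inl (ihl _ ⟨j, ℓ - 1, by omega, by omega, ?_, by omega⟩))
        intro i hi
        have h := h3 i hi
        rw [show j + 1 + 1 + i = (j + 1 + i) + 1 by omega,
          tilde_get_left l r (by omega)] at h
        omega
    · by_cases hk2 : k = (tilde l).length
      · -- x is all of tilde r
        subst hk2
        have E1 := tilde_get_right l r (show 0 < (tilde r).length by omega)
        rw [show (tilde l).length + 1 + 0 = (tilde l).length + 1 by omega] at E1
        have E0 := tilde_get_left l r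
          (show (tilde l).length - 1 < (tilde l).length by omega)
        rw [show (tilde l).length - 1 + 1 = (tilde l).length by omega] at E0
        have E3 := tilde_last l
        rw [show (tilde l).length + (tilde s).length
            = (tilde l).length + 1 + ((tilde s).length - 1) by omega,
          tilde_get_right l r (by omega)] at h4
        have hm := h3 ((tilde s).length - 1) (by omega)
        rw [tilde_get_right l r (show (tilde s).length - 1 < (tilde r).length by omega)] at hm
        have hrn : (tilde r)[(tilde s).length - 1]! = 0 := by
          rw [E1, E0, E3] at h2
          rw [E1] at h4
          omega
        have hnb : (tilde s).length = (tilde r).length := by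
          by_contra hne
          exact tilde_pos r (by omega) hrn
        have hl : ℓ = 0 := by rw [hrn, hxlast] at hm; omega
        subst hl
        have hxeq : tilde s = tilde r := by
          apply eq_of_get! hnb
          intro i hi
          have h := h3 i hi
          rw [tilde_get_right l r (by omega)] at h
          omega
        rw [tilde_inj hxeq]
        exact Or.inr (Or.inr (subtree_refl r))
      · by_cases hk3 : (tilde l).length + 1 ≤ k
        · -- occurrence inside tilde r
          obtain ⟨m, rfl⟩ : ∃ m, k = (tilde l).length + 1 + m :=
            ⟨k - (tilde l).length - 1, by omega⟩
          have Em : (tilde (BTree.node l r))[(tilde l).length + 1 + m]! = (tilde r)[m]! :=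
            tilde_get_right l r (by omega)
          have Em1 : (tilde (BTree.node l r))[(tilde l).length + 1 + (m + 1)]!
              = (tilde r)[m + 1]! := tilde_get_right l r (by omega)
          rw [show (tilde l).length + 1 + m + 1 = (tilde l).length + 1 + (m + 1) by omega,
            Em1, Em] at h2
          rw [show (tilde l).length + 1 + m + (tilde s).length
              = (tilde l).length + 1 + (m + (tilde s).length) by omega,
            tilde_get_right l r (by omega),
            show (tilde l).length + 1 + m + 1 = (tilde l).length + 1 + (m + 1) by omega,
            Em1] at h4
          refine Or.inr (Or.inr (ihr _ ⟨m, ℓ, by omega, h2, ?_, h4⟩))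
          intro i hi
          have h := h3 i hi
          rw [show (tilde l).length + 1 + m + 1 + i
              = (tilde l).length + 1 + (m + 1 + i) by omega,
            tilde_get_right l r (by omega)] at h
          exact h
        · -- straddling case: contradiction
          exfalso
          have hka : k + 1 ≤ (tilde l).length := by omega
          have hkn : (tilde l).length + 1 ≤ k + (tilde s).length := by omega
          have hmid := h3 ((tilde l).length - 1 - k) (by omega)
          rw [show k + 1 + ((tilde l).length - 1 - k) = ((tilde l).length - 1) + 1 by omega,
            tilde_get_left l r (by omega), tilde_last l] at hmid
          rcases Nat.eq_zero_or_pos ℓ with rfl | hl1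
          · obtain ⟨j, hj, hjb⟩ : ∃ j, k + (tilde s).length = (tilde l).length + 1 + j
                ∧ j < (tilde r).length :=
              ⟨k + (tilde s).length - (tilde l).length - 1, by omega, by omega⟩
            have hmn := h3 ((tilde s).length - 1) (by omega)
            rw [show k + 1 + ((tilde s).length - 1) = (tilde l).length + 1 + j by omega,
              tilde_get_right l r hjb] at hmn
            have hjlast : j = (tilde r).length - 1 := by
              by_contra hne
              exact tilde_pos r (i := j) (by omega) (by omega)
            have E4 := tilde_get_right l r hjb
            rw [← hj] at E4
            rcases Nat.eq_zero_or_pos k with rfl | hk0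
            · have E0 := tilde_get_zero_node l r
              rw [E4] at h4
              omega
            · obtain ⟨p, rfl⟩ : ∃ p, k = p + 1 := ⟨k - 1, by omega⟩
              have E5 : (tilde (BTree.node l r))[p + 1 + 1]! = (tilde l)[p + 1]! + 1 :=
                tilde_get_left l r (by omega)
              have E6 : (tilde (BTree.node l r))[p + 1]! = (tilde l)[p]! + 1 :=
                tilde_get_left l r (by omega)
              rw [E5, E6] at h2
              rw [E4, E5] at h4
              exact tilde_pos l (show p < (tilde l).length - 1 by omega)
                (show (tilde l)[p]! = 0 by omega)
          · -- ℓ >= 1 : interior zero in x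
            have hx0 : (tilde s)[(tilde l).length - 1 - k]! = 0 := by omega
            exact tilde_pos s (by omega) hx0

/- ### main theorem -/

theorem subtree_iff_R (t₁ t₂ : BTree) :
    Subtree t₁ t₂ ↔ R (tilde t₁) (tilde t₂) := by
  constructor
  · intro h
    induction t₂ with
    | bot =>
      have : t₁ = .bot := h
      subst this
      exact Or.inl rfl
    | node l r ihl ihr =>
      rcases h with rfl | h | h
      · exact Or.inr (Or.inl rfl)
      · rcases ihl h with h0 | heq | hiso
        · exact Or.inl h0
        · have : t₁ = l := tilde_inj heq
          subst this
          cases t₁ with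
          | bot => exact Or.inl rfl
          | node a b => exact Or.inr (Or.inr (iso_left_whole a b r))
        · exact Or.inr (Or.inr (iso_oplus_left l r (tilde_length_pos t₁) hiso))
      · rcases ihr h with h0 | heq | hiso
        · exact Or.inl h0
        · have : t₁ = r := tilde_inj heq
          subst this
          cases t₁ with
          | bot => exact Or.inl rfl
          | node a b => exact Or.inr (Or.inr (iso_right_whole l a b))
        · exact Or.inr (Or.inr (iso_oplus_right l r (tilde_length_pos t₁) hiso))
  · intro h
    rcases h with h0 | heq | hiso
    · have : t₁ = .bot := tilde_inj (h0.trans rfl)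
      subst this
      exact bot_subtree t₂
    · have : t₁ = t₂ := tilde_inj heq
      subst this
      exact subtree_refl t₁
    · exact iso_subtree t₂ t₁ hiso
end

section
/- In any model of the theory Seq, the translated adjunction axiom holds: for all x, y, u, we have (∃v₁v₂ [(v₁ ⊢ u) ∘ v₂ = x ⊢ y]) if and only if ((∃v₁v₂ [(v₁ ⊢ u) ∘ v₂ = x]) or u = y). -/
theorem Seq_proves_translated_adjunction {M : Type*}
    (e : M) (app cat : M → M → M)
    (S1 : ∀ x y, app x y ≠ e)
    (S2 : ∀ x₁ x₂ y₁ y₂, app x₁ x₂ = app y₁ y₂ → x₁ = y₁ ∧ x₂ = y₂)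
    (S3 : ∀ x, cat x e = x)
    (S4 : ∀ x y z, cat x (app y z) = app (cat x y) z)
    (S5 : ∀ x, x = e ∨ ∃ y z, x = app y z) :
    ∀ x y u, (∃ v₁ v₂, cat (app v₁ u) v₂ = app x y) ↔
      ((∃ v₁ v₂, cat (app v₁ u) v₂ = x) ∨ u = y) := by
  intro x y u
  constructor
  · rintro ⟨v₁, v₂, h⟩
    rcases S5 v₂ with rfl | ⟨a, b, rfl⟩
    · rw [S3] at h
      exact Or.inr (S2 _ _ _ _ h).2
    · rw [S4] at h
      obtain ⟨h1, h2⟩ := S2 _ _ _ _ h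
      exact Or.inl ⟨v₁, a, h1⟩
  · rintro (⟨v₁, v₂, h⟩ | rfl)
    · exact ⟨v₁, app v₂ y, by rw [S4, h]⟩
    · exact ⟨x, e, by rw [S3]⟩
end

section
/- In any model of Seq, for all x, y: x ⊑ (w ⊢ y) (i.e., ∃z [x ∘ z = w ⊢ y]) if and only if x = w ⊢ y or x ⊑ w. -/
theorem Seq_subseq_of_app {M : Type*}
    (e : M) (app cat : M → M → M)
    (S1 : ∀ x y, app x y ≠ e)
    (S2 : ∀ x₁ x₂ y₁ y₂, app x₁ x₂ = app y₁ y₂ → x₁ = y₁ ∧ x₂ = y₂)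
    (S3 : ∀ x, cat x e = x)
    (S4 : ∀ x y z, cat x (app y z) = app (cat x y) z)
    (S5 : ∀ x, x = e ∨ ∃ y z, x = app y z) :
    ∀ w x y, (∃ z, cat x z = app w y) ↔ (x = app w y ∨ ∃ z, cat x z = w) := by
  intro w x y
  constructor
  · rintro ⟨z, hz⟩
    rcases S5 z with rfl | ⟨u, v, rfl⟩
    · left; rw [S3] at hz; exact hz
    · right
      rw [S4] at hz
      obtain ⟨h1, h2⟩ := S2 _ _ _ _ hz
      exact ⟨u, h1⟩
  · rintro (rfl | ⟨z, hz⟩)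
    · exact ⟨e, S3 _⟩
    · exact ⟨app z y, by rw [S4, hz]⟩
end

section
/- The subsequence relation defined in a model of Seq restricted to numerals is a prefix relation: for every sequence s, an element x of any model of Seq satisfies x ⊑ s̄ if and only if x = t̄ for some initial segment t of s, where s̄ denotes the sequeral (canonical term denotation) of s. -/
/-- Sequences of the standard model. -/
inductive Sq | mk (l : List Sq)

def Sq.len : Sq → ℕ
  | .mk a => a.length

def Sq.take : Sq → ℕ → Sq
  | .mk a, k => .mk (a.take k)

/-- `s` is an initial segment of `t`. -/
def Sq.isInit (s t : Sq) : Prop := ∃ k, k ≤ t.len ∧ s = t.take k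

variable {M : Type*} (e : M) (app : M → M → M)

/-- The sequeral (canonical name) of a sequence, interpreted in a model. -/
def bar : Sq → M
  | .mk l => l.attach.foldl (fun acc s => app acc (bar s.1)) e
decreasing_by
  have := List.sizeOf_lt_of_mem s.2
  simp only [Sq.mk.sizeOf_spec]
  omega

/-- Fold helper starting from an arbitrary element. -/
def fld (x : M) (l : List Sq) : M := l.foldl (fun acc s => app acc (bar e app s)) x

lemma fld_append (x : M) (l₁ l₂ : List Sq) :
    fld e app x (l₁ ++ l₂) = fld e app (fld e app x l₁) l₂ := by
  simp [fld]

lemma fld_snoc (x : M) (l : List Sq) (a : Sq) :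
    fld e app x (l ++ [a]) = app (fld e app x l) (bar e app a) := by
  simp [fld]

lemma bar_mk (l : List Sq) : bar e app (.mk l) = fld e app e l := by
  rw [bar, fld]
  conv_rhs => rw [← List.attach_map_subtype_val l]
  rw [List.foldl_map]

theorem Seq_subseq_of_sequeral
    (cat : M → M → M)
    (S1 : ∀ x y, app x y ≠ e)
    (S2 : ∀ x₁ x₂ y₁ y₂, app x₁ x₂ = app y₁ y₂ → x₁ = y₁ ∧ x₂ = y₂)
    (S3 : ∀ x, cat x e = x)
    (S4 : ∀ x y z, cat x (app y z) = app (cat x y) z)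
    (S5 : ∀ x, x = e ∨ ∃ y z, x = app y z) :
    ∀ (s : Sq) (x : M),
      (∃ z, cat x z = bar e app s) ↔ ∃ t : Sq, t.isInit s ∧ x = bar e app t := by
  have cat_fld : ∀ (x : M) (l : List Sq), cat x (fld e app e l) = fld e app x l := by
    intro x l
    induction l using List.reverseRecOn with
    | nil => simpa [fld] using S3 x
    | append_singleton l a ih => rw [fld_snoc, S4, ih, fld_snoc]
  rintro ⟨l⟩ x
  constructor
  · rintro ⟨z, hz⟩
    rw [bar_mk] at hz
    suffices h : ∃ k ≤ l.length, x = fld e app e (l.take k) by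
      obtain ⟨k, hk, hx⟩ := h
      exact ⟨.mk (l.take k), ⟨k, hk, rfl⟩, by rw [bar_mk]; exact hx⟩
    induction l using List.reverseRecOn generalizing z with
    | nil =>
      rcases S5 z with he | ⟨y, w, rfl⟩
      · refine ⟨0, by simp, ?_⟩
        rw [he, S3] at hz
        simp only [fld, List.foldl_nil, List.take_nil]
        rw [hz, fld, List.foldl_nil]
      · rw [S4] at hz
        simp only [fld, List.foldl_nil] at hz
        exact absurd hz (S1 _ _)
    | append_singleton l a ih =>
      rcases S5 z with he | ⟨y, w, rfl⟩
      · refine ⟨(l ++ [a]).length, le_refl _, ?_⟩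
        rw [he, S3] at hz
        rw [List.take_length, hz]
      · rw [S4, fld_snoc] at hz
        obtain ⟨h1, _⟩ := S2 _ _ _ _ hz
        obtain ⟨k, hk, hx⟩ := ih y h1
        exact ⟨k, by simp; omega, by rwa [List.take_append_of_le_length hk]⟩
  · rintro ⟨t, ⟨k, hk, rfl⟩, rfl⟩
    refine ⟨fld e app e (l.drop k), ?_⟩
    rw [Sq.take, bar_mk, bar_mk, cat_fld, ← fld_append, List.take_append_drop]
end
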